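/- arXiv:1110.2248 — 5 statements merged into one kernel-verified Lean document; each statement's English description precedes it below -/
import Mathlib

section
/- Let R = ⊕_{n∈ℤ} R_n be a ℤ-graded ring, let n ≠ 0, and let a ∈ R_n be a homogeneous element of degree n. Then 1 + a is invertible in R if and only if a is nilpotent. -/
/-!
If `(1 - x) b = 1` with `x` homogeneous of degree `n ≠ 0`, then `b = 1 + x b`, so the homogeneous
components `c k` of `b` satisfy `c k = δ_{k,0} + x c (k - n)`. Reading this recurrence upwards
from degree `0` gives `c (m n) = x ^ m c 0`, and downwards gives `c 0 = 1 + x ^ m c (-m n)`.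
Only finitely many components are nonzero, so for large `m` both far ends vanish: `c 0 = 1` and
then `x ^ m = 0`. The converse is the geometric series.
-/

open DirectSum Filter

section Recurrence

variable {R : Type*} [Ring R] {x : R} {n : ℤ} {c : ℤ → R}

theorem eq_pow_mul_of_recurrence (hn : n ≠ 0)
    (hc : ∀ k, c k = (if k = 0 then 1 else 0) + x * c (k - n)) (m : ℕ) :
    c (m * n) = x ^ m * c 0 := by
  induction m with
  | zero => simp
  | succ m ih =>
    have hne : ((m + 1 : ℕ) : ℤ) * n ≠ 0 := mul_ne_zero (by omega) hn
    rw [hc, if_neg hne, zero_add, pow_succ', mul_assoc, ← ih]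
    congr 2
    push_cast
    ring

theorem eq_one_add_pow_mul_of_recurrence (hn : n ≠ 0)
    (hc : ∀ k, c k = (if k = 0 then 1 else 0) + x * c (k - n)) {m : ℕ} (hm : 0 < m) :
    c 0 = 1 + x ^ m * c (-(m * n)) := by
  induction m, hm using Nat.le_induction with
  | base => simpa using hc 0
  | succ m hm ih =>
    have hne : -((m : ℤ) * n) ≠ 0 := neg_ne_zero.mpr (mul_ne_zero (by omega) hn)
    rw [ih, hc (-(m * n)), if_neg hne, zero_add, ← mul_assoc, ← pow_succ]
    congr 3
    push_cast
    ring

theorem isNilpotent_of_recurrence (hn : n ≠ 0)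
    (hc : ∀ k, c k = (if k = 0 then 1 else 0) + x * c (k - n))
    (hfin : ∀ᶠ k in cofinite, c k = 0) : IsNilpotent x := by
  have hinj : Function.Injective fun m : ℕ => (m : ℤ) * n := fun _ _ h => by
    simpa using mul_right_cancel₀ hn h
  have hinj' : Function.Injective fun m : ℕ => -((m : ℤ) * n) := neg_injective.comp hinj
  obtain ⟨m, ⟨hup, hdown⟩, hm⟩ := (((hinj.tendsto_cofinite.eventually hfin).and
    (hinj'.tendsto_cofinite.eventually hfin)).and
    (Nat.cofinite_eq_atTop ▸ eventually_gt_atTop 0)).exists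
  have h0 : c 0 = 1 := by simpa [hdown] using eq_one_add_pow_mul_of_recurrence hn hc hm
  exact ⟨m, by simpa [h0, hup] using (eq_pow_mul_of_recurrence hn hc m).symm⟩

end Recurrence

section Graded

variable {ι R σ : Type*} [DecidableEq ι] [AddCommGroup ι] [Ring R] [SetLike σ R]
  [AddSubgroupClass σ R] (𝒜 : ι → σ) [GradedRing 𝒜]

theorem coe_decompose_one_apply (k : ι) :
    (decompose 𝒜 (1 : R) k : R) = if k = 0 then 1 else 0 := by
  rw [decompose_one, one_def, coe_of_apply]
  split_ifs <;> simp_all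

theorem coe_decompose_eq_of_eq_one_add_mul {x b : R} {n : ι} (hx : x ∈ 𝒜 n)
    (hb : b = 1 + x * b) (k : ι) :
    (decompose 𝒜 b k : R) = (if k = 0 then 1 else 0) + x * decompose 𝒜 b (k - n) := by
  conv_lhs =>
    rw [hb, decompose_add, DirectSum.add_apply, AddMemClass.coe_add, ← add_sub_cancel n k]
  rw [coe_decompose_one_apply, coe_decompose_mul_add_of_left_mem 𝒜 hx, add_sub_cancel]

theorem eventually_coe_decompose_eq_zero (b : R) :
    ∀ᶠ k in cofinite, (decompose 𝒜 b k : R) = 0 := by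
  classical
  exact (decompose 𝒜 b).support.finite_toSet.subset fun k hk =>
    (DFinsupp.mem_support_iff).mpr fun h => hk (by simp [h])

end Graded

/-- **Bergman's theorem, part (ii)**: if `R = ⊕_{n ∈ ℤ} R_n` is a `ℤ`-graded ring, `n ≠ 0`,
and `a ∈ R_n` is a homogeneous element of degree `n`, then `1 + a` is invertible in `R`
if and only if `a` is nilpotent. -/
theorem isUnit_one_add_iff_isNilpotent_of_zgraded
    {R σ : Type*} [Ring R] [SetLike σ R] [AddSubgroupClass σ R]
    (𝒜 : ℤ → σ) [GradedRing 𝒜]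
    (n : ℤ) (hn : n ≠ 0) (a : R) (ha : a ∈ 𝒜 n) :
    IsUnit (1 + a) ↔ IsNilpotent a := by
  refine ⟨fun ⟨u, hu⟩ => ?_, IsNilpotent.isUnit_one_add⟩
  have hb : (↑u⁻¹ : R) = 1 + -a * ↑u⁻¹ := by
    have hinv : (1 + a) * ↑u⁻¹ = 1 := hu ▸ u.mul_inv
    rw [add_mul, one_mul] at hinv
    rw [neg_mul, ← sub_eq_add_neg, eq_sub_iff_add_eq, hinv]
  have hneg : IsNilpotent (-a) := isNilpotent_of_recurrence hn
    (coe_decompose_eq_of_eq_one_add_mul 𝒜 (neg_mem ha) hb) (eventually_coe_decompose_eq_zero 𝒜 _)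
  simpa using hneg.neg
end

section
/- Let R = ⊕_{n∈ℕ} R_n be an ℕ-graded ring and let a ∈ R_n be a homogeneous element of positive degree n > 0 lying in the Jacobson radical J(R). Then a is nilpotent. -/
/-!
Since `a` lies in the Jacobson radical, `1 - a` has a left inverse `u`, so `u = 1 + u * a`.
For `a` homogeneous of degree `n > 0`, comparing homogeneous components of degree `m * n`
gives `u_{m n} = u_{(m-1) n} * a`, hence `u_{m n} = a ^ m`. Since `u` has only finitely many
nonzero components, some power of `a` vanishes.
-/

/-- The Jacobson radical of a ring `R`. -/
noncomputable def jacobsonRadical (R : Type*) [Ring R] : TwoSidedIdeal R :=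
  (⊥ : TwoSidedIdeal R).jacobson

open DirectSum

theorem exists_mul_one_sub_eq_one_of_mem_jacobsonRadical {R : Type*} [Ring R] {a : R}
    (ha : a ∈ jacobsonRadical R) : ∃ u, u * (1 - a) = 1 := by
  obtain ⟨u, hu⟩ := TwoSidedIdeal.mem_jacobson_iff.mp ha (-1)
  refine ⟨u, ?_⟩
  rw [TwoSidedIdeal.mem_bot] at hu
  rw [← sub_eq_zero, ← hu]
  noncomm_ring

section GradedRing

variable {R σ : Type*} [Ring R] [SetLike σ R] [AddSubgroupClass σ R] (𝒜 : ℕ → σ) [GradedRing 𝒜]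

theorem coe_decompose_mul_eq_pow_of_mul_one_sub_eq_one {n : ℕ} (hn : 0 < n) {a u : R}
    (ha : a ∈ 𝒜 n) (hu : u * (1 - a) = 1) (m : ℕ) :
    (decompose 𝒜 u (m * n) : R) = a ^ m := by
  have hu' : u = 1 + u * a := by rw [← hu]; noncomm_ring
  have component (k : ℕ) :
      (decompose 𝒜 u k : R) = decompose 𝒜 (1 : R) k + decompose 𝒜 (u * a) k := by
    conv_lhs => rw [hu']
    rw [decompose_add, DirectSum.add_apply, AddMemClass.coe_add]
  induction m with
  | zero =>
    rw [zero_mul, component, decompose_of_mem_same 𝒜 SetLike.GradedOne.one_mem,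
      coe_decompose_mul_of_right_mem_of_not_le 𝒜 ha (by omega), pow_zero, add_zero]
  | succ m ih =>
    rw [component, decompose_of_mem_ne 𝒜 SetLike.GradedOne.one_mem (by positivity),
      coe_decompose_mul_of_right_mem_of_le 𝒜 ha (Nat.le_mul_of_pos_left n m.succ_pos),
      Nat.succ_mul, Nat.add_sub_cancel, ih, zero_add, pow_succ]

theorem isNilpotent_of_mul_one_sub_eq_one {n : ℕ} (hn : 0 < n) {a u : R} (ha : a ∈ 𝒜 n)
    (hu : u * (1 - a) = 1) : IsNilpotent a := by
  classical
  obtain ⟨m, hm⟩ := Infinite.exists_notMem_finset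
    ((decompose 𝒜 u).support.preimage (· * n) (mul_left_injective₀ hn.ne').injOn)
  rw [Finset.mem_preimage, DFinsupp.notMem_support_iff] at hm
  exact ⟨m, by rw [← coe_decompose_mul_eq_pow_of_mul_one_sub_eq_one 𝒜 hn ha hu, hm,
    ZeroMemClass.coe_zero]⟩

end GradedRing

/-- If `R = ⊕_{n ∈ ℕ} R_n` is an `ℕ`-graded ring and `a ∈ R_n` is a homogeneous element of
positive degree `n > 0` lying in the Jacobson radical `J(R)`, then `a` is nilpotent. -/
theorem isNilpotent_of_homogeneous_mem_jacobson
    {R σ : Type*} [Ring R] [SetLike σ R] [AddSubgroupClass σ R]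
    (𝒜 : ℕ → σ) [GradedRing 𝒜]
    (n : ℕ) (hn : 0 < n) (a : R) (ha : a ∈ 𝒜 n)
    (haJ : a ∈ jacobsonRadical R) :
    IsNilpotent a := by
  obtain ⟨u, hu⟩ := exists_mul_one_sub_eq_one_of_mem_jacobsonRadical haJ
  exact isNilpotent_of_mul_one_sub_eq_one 𝒜 hn ha hu
end

section
/- Let Ω be a set of words in the free monoid 𝔅 on a finite alphabet X, and let u be a normal word (no element of Ω divides u). If there exists a word v such that (uv)^q is normal for all q ∈ ℕ, then the residue class of u in R = K⟨X⟩/⟨Ω⟩ does not lie in the upper nilradical of R. -/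
open scoped Classical

/-- Words in the letters `X_1, …, X_n`: the free monoid on `Fin n`. -/
abbrev Word (n : ℕ) := FreeMonoid (Fin n)

/-- The free associative `K`-algebra `K⟨X_1,…,X_n⟩`, realised as the monoid algebra of the
free monoid on `Fin n`. -/
abbrev FreeAlg (K : Type) [Field K] (n : ℕ) := MonoidAlgebra K (Word n)

/-- The word `v` divides the word `u` if `u = w * v * s` for some words `w, s`. -/
def WDvd {n : ℕ} (v u : Word n) : Prop := ∃ w s : Word n, u = w * v * s

/-- The monomial of `K⟨X⟩` corresponding to a word. -/
noncomputable def mono {K : Type} [Field K] {n : ℕ} (w : Word n) : FreeAlg K n :=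
  MonoidAlgebra.single w 1

/-- The two-sided ideal of `K⟨X⟩` generated by a set of words (a monomial ideal). -/
noncomputable def monIdeal (K : Type) [Field K] {n : ℕ} (Ω : Set (Word n)) :
    TwoSidedIdeal (FreeAlg K n) :=
  TwoSidedIdeal.span (mono '' Ω)

/-- A ring is semiprime if `a R a = 0` implies `a = 0`. -/
def IsSemiprimeRing (R : Type*) [Ring R] : Prop :=
  ∀ a : R, (∀ r : R, a * r * a = 0) → a = 0

/-- A ring is semiprimitive (Jacobson semisimple) if its Jacobson radical is zero. -/
def IsSemiprimitiveRing (R : Type*) [Ring R] : Prop :=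
  (⊥ : TwoSidedIdeal R).jacobson = ⊥

/-- A monomial ordering on the words: a multiplication-compatible well-ordering. -/
structure MonOrder (n : ℕ) where
  /-- the strict order relation -/
  lt : Word n → Word n → Prop
  trichotomous : ∀ u v : Word n, lt u v ∨ u = v ∨ lt v u
  trans : ∀ {u v w : Word n}, lt u v → lt v w → lt u w
  wf : WellFounded lt
  mul_compat : ∀ u v w s : Word n, lt u v → lt (w * u * s) (w * v * s)
  one_lt : ∀ u w s : Word n, w * u * s ≠ u → lt u (w * u * s)

/-- The leading monomial (word) of a nonzero element of `K⟨X⟩` with respect to a monomial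
ordering: the `≺`-largest word in its support (and `1` by convention for `0`). -/
noncomputable def LM {K : Type} [Field K] {n : ℕ} (o : MonOrder n) (f : FreeAlg K n) :
    Word n :=
  if h : ∃ w ∈ f.coeff.support, ∀ v ∈ f.coeff.support, v ≠ w → o.lt v w then h.choose else 1

/-- The weight degree of a word, where the letter `i` has weight `wt i`. -/
def wdeg {n : ℕ} (wt : Fin n → ℕ) (u : Word n) : ℕ :=
  (FreeMonoid.toList u |>.map wt).sum

/-- `f` is homogeneous of degree `p` with respect to the weight grading. -/
def IsHomogeneous {K : Type} [Field K] {n : ℕ} (wt : Fin n → ℕ) (f : FreeAlg K n)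
    (p : ℕ) : Prop :=
  ∀ w ∈ f.coeff.support, wdeg wt w = p

/-- The (highest-degree) leading homogeneous component of `f` with respect to the weight
grading. -/
noncomputable def LH {K : Type} [Field K] {n : ℕ} (wt : Fin n → ℕ) (f : FreeAlg K n) :
    FreeAlg K n :=
  MonoidAlgebra.ofCoeff (Finsupp.filter (fun w => wdeg wt w = f.coeff.support.sup (wdeg wt)) f.coeff)

/-- `𝒢` is a Gröbner basis of the two-sided ideal `I` w.r.t. the monomial ordering `o`:
`𝒢 ⊆ I ∖ {0}` and the leading monomials of `I` and of `𝒢` generate the same monomial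
ideal. -/
def IsGrobnerBasis {K : Type} [Field K] {n : ℕ} (o : MonOrder n)
    (𝒢 : Set (FreeAlg K n)) (I : TwoSidedIdeal (FreeAlg K n)) : Prop :=
  𝒢 ⊆ {f | f ∈ I ∧ f ≠ 0} ∧
    monIdeal K (LM o '' {f : FreeAlg K n | f ∈ I ∧ f ≠ 0}) = monIdeal K (LM o '' 𝒢)

/-- The upper nilradical of a ring: the sum (supremum) of all nil two-sided ideals. -/
noncomputable def upperNilradical (R : Type*) [Ring R] : TwoSidedIdeal R :=
  sSup {I : TwoSidedIdeal R | ∀ x ∈ I, IsNilpotent x}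


/-! If the class of `u` lay in the upper nilradical, so would the class of `uv`; since a sum of
nil ideals is nil, the upper nilradical is itself a nil ideal, so some `(uv)^q` would lie in
`⟨Ω⟩`. But every word in the support of an element of the monomial ideal `⟨Ω⟩` is divisible
by some `ω ∈ Ω`, while `(uv)^q` is normal. -/

namespace MonoidAlgebra

variable {k G : Type*} [Ring k] [Monoid G]

noncomputable def supportedTwoSidedIdeal (S : Set G) (hS : ∀ a b : G, ∀ m ∈ S, a * m * b ∈ S) :
    TwoSidedIdeal (MonoidAlgebra k G) :=
  TwoSidedIdeal.mk' {x | ↑x.coeff.support ⊆ S} (by simp)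
    (fun hx hy _ hm => (Finset.mem_union.mp (Finsupp.support_add hm)).elim (hx ·) (hy ·))
    (fun hx m hm => hx (by rwa [coeff_neg, Finsupp.support_neg] at hm))
    (fun {x y} hy m hm => by
      obtain ⟨a, -, b, hb, rfl⟩ := Finset.mem_mul.mp (support_coeff_mul_subset x y hm)
      simpa using hS a 1 b (hy hb))
    (fun {x y} hx m hm => by
      obtain ⟨a, ha, b, -, rfl⟩ := Finset.mem_mul.mp (support_coeff_mul_subset x y hm)
      simpa using hS 1 b a (hx ha))

theorem mem_supportedTwoSidedIdeal {S : Set G} {hS : ∀ a b : G, ∀ m ∈ S, a * m * b ∈ S}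
    {x : MonoidAlgebra k G} :
    x ∈ supportedTwoSidedIdeal S hS ↔ ↑x.coeff.support ⊆ S :=
  TwoSidedIdeal.mem_mk' ..

theorem exists_mul_mul_of_mem_twoSidedIdeal_span_of_image {s : Set G}
    {x : MonoidAlgebra k G} (hx : x ∈ TwoSidedIdeal.span (of k G '' s)) :
    ∀ m ∈ x.coeff.support, ∃ m' ∈ s, ∃ a b, m = a * m' * b := by
  let S : Set G := {m | ∃ m' ∈ s, ∃ a b, m = a * m' * b}
  have hS : ∀ a b : G, ∀ m ∈ S, a * m * b ∈ S := by
    rintro a b _ ⟨m', hm', c, d, rfl⟩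
    exact ⟨m', hm', a * c, d * b, by simp only [mul_assoc]⟩
  have hspan : TwoSidedIdeal.span (of k G '' s) ≤ supportedTwoSidedIdeal S hS := by
    rw [TwoSidedIdeal.span_le]
    rintro _ ⟨m', hm', rfl⟩
    rw [SetLike.mem_coe, mem_supportedTwoSidedIdeal]
    intro m hm
    rw [of_apply, coeff_single, Finset.mem_coe] at hm
    obtain rfl := Finset.mem_singleton.mp (Finsupp.support_single_subset hm)
    exact ⟨m, hm', 1, 1, by simp⟩
  exact mem_supportedTwoSidedIdeal.mp (hspan hx)

end MonoidAlgebra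

theorem mono_eq_of {K : Type} [Field K] {n : ℕ} :
    (mono : Word n → FreeAlg K n) = MonoidAlgebra.of K (Word n) :=
  rfl

theorem exists_wdvd_of_mono_mem_monIdeal {K : Type} [Field K] {n : ℕ} {Ω : Set (Word n)}
    {w : Word n} (h : mono (K := K) w ∈ monIdeal K Ω) : ∃ ω ∈ Ω, WDvd ω w := by
  rw [monIdeal, mono_eq_of] at h
  obtain ⟨ω, hω, a, b, hw⟩ :=
    MonoidAlgebra.exists_mul_mul_of_mem_twoSidedIdeal_span_of_image h w (by simp)
  exact ⟨ω, hω, a, b, hw⟩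

namespace TwoSidedIdeal

variable {R : Type*} [Ring R]

theorem mk'_ringCon_eq_zero_iff (I : TwoSidedIdeal R) {x : R} :
    I.ringCon.mk' x = 0 ↔ x ∈ I := by
  rw [← mem_ker, ker_ringCon_mk']

def IsNil (I : TwoSidedIdeal R) : Prop := ∀ x ∈ I, IsNilpotent x

theorem IsNil.sup {I J : TwoSidedIdeal R} (hI : I.IsNil) (hJ : J.IsNil) : (I ⊔ J).IsNil := by
  intro x hx
  obtain ⟨a, ha, b, hb, rfl⟩ := mem_sup.mp hx
  obtain ⟨k, hk⟩ := hJ b hb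
  -- modulo `I`, `(a + b) ^ k ≡ b ^ k = 0`
  have hpow : (a + b) ^ k ∈ I := by
    rw [← mk'_ringCon_eq_zero_iff, map_pow, map_add, (mk'_ringCon_eq_zero_iff I).mpr ha,
      zero_add, ← map_pow, hk, map_zero]
  exact (hI _ hpow).of_pow

theorem isNil_upperNilradical : (upperNilradical R).IsNil := by
  let N : TwoSidedIdeal R := mk' {x | ∃ I : TwoSidedIdeal R, I.IsNil ∧ x ∈ I}
    ⟨⊥, fun y hy => by simp [(mem_bot R).mp hy], zero_mem _⟩
    (fun ⟨I, hI, hxI⟩ ⟨J, hJ, hyJ⟩ =>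
      ⟨I ⊔ J, hI.sup hJ, add_mem _ (mem_sup_left hxI) (mem_sup_right hyJ)⟩)
    (fun ⟨I, hI, hxI⟩ => ⟨I, hI, neg_mem _ hxI⟩)
    (fun ⟨I, hI, hyI⟩ => ⟨I, hI, mul_mem_left _ _ _ hyI⟩)
    (fun ⟨I, hI, hxI⟩ => ⟨I, hI, mul_mem_right _ _ _ hxI⟩)
  have hle : upperNilradical R ≤ N := sSup_le fun I hI x hx => (mem_mk' ..).mpr ⟨I, hI, hx⟩
  intro x hx
  obtain ⟨I, hI, hxI⟩ := (mem_mk' ..).mp (hle hx)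
  exact hI x hxI

end TwoSidedIdeal

theorem cyclic_normal_word_not_mem_upperNilradical_general {K : Type} [Field K] {n : ℕ}
    (Ω : Set (Word n)) (u : Word n)
    (hcyc : ∃ v : Word n, ∀ q : ℕ, ¬ ∃ ω ∈ Ω, WDvd ω ((u * v) ^ q)) :
    RingCon.mk' (monIdeal K Ω).ringCon (mono u) ∉
      upperNilradical (monIdeal K Ω).ringCon.Quotient := by
  obtain ⟨v, hv⟩ := hcyc
  intro hu
  set π := RingCon.mk' (monIdeal K Ω).ringCon
  have huv : π (mono (u * v)) ∈ upperNilradical _ := by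
    rw [mono_eq_of, map_mul, map_mul]
    exact TwoSidedIdeal.mul_mem_right _ _ _ hu
  obtain ⟨q, hq⟩ := TwoSidedIdeal.isNil_upperNilradical _ huv
  rw [← map_pow, mono_eq_of, ← map_pow, TwoSidedIdeal.mk'_ringCon_eq_zero_iff] at hq
  exact hv q (exists_wdvd_of_mono_mem_monIdeal hq)

/-- Let `Ω` be a set of words and `u` a normal word (no element of `Ω` divides `u`).  If
there is a word `v` such that `(uv)^q` is normal for all `q ∈ ℕ`, then the residue class
of `u` in `R = K⟨X⟩/⟨Ω⟩` does not lie in the upper nilradical of `R`. -/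
theorem cyclic_normal_word_not_mem_upperNilradical {K : Type} [Field K] {n : ℕ}
    (Ω : Set (Word n)) (u : Word n)
    (hu : ¬ ∃ ω ∈ Ω, WDvd ω u)
    (hcyc : ∃ v : Word n, ∀ q : ℕ, ¬ ∃ ω ∈ Ω, WDvd ω ((u * v) ^ q)) :
    RingCon.mk' (monIdeal K Ω).ringCon (mono u) ∉
      upperNilradical (monIdeal K Ω).ringCon.Quotient :=
  cyclic_normal_word_not_mem_upperNilradical_general Ω u hcyc
end

section
/- Let K⟨X⟩ have a weight ℕ-grading with grading filtration F_p K⟨X⟩ = ⊕_{q≤p} K⟨X⟩_q, let ≺_gr be an ℕ-graded monomial ordering, and let 𝒢 be a finite Gröbner basis of I = ⟨𝒢⟩ with respect to ≺_gr. Then LH(𝒢) = {LH(g) : g ∈ 𝒢} is a Gröbner basis of the graded ideal ⟨LH(𝒢)⟩, where LH(g) denotes the leading (highest-degree) homogeneous component of g, and LM(LH(g)) = LM(g) for each g ∈ 𝒢. -/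
/-!
Every element `f` of `⟨LH(𝒢)⟩` is a sum of homogeneous terms `c · u · LH(g) · v`. Keeping only
the terms of degree `p = deg f` and replacing each `LH(g)` there by `g` gives `f' ∈ I` with
`deg f' ≤ p` and the same degree-`p` part, hence `LH(f') = LH(f)`. Since `≺_gr` compares degrees
first, `LM(LH(h)) = LM(h)` for every `h ≠ 0`; so `LM(f) = LM(f')` lies in `LM(I)`, whose monomial
ideal is generated by `LM(𝒢) = LM(LH(𝒢))`.
-/

open scoped Classical

namespace MonOrder

variable {n : ℕ} (o : MonOrder n)

lemma lt_irrefl (u : Word n) : ¬ o.lt u u := o.wf.irrefl.irrefl u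

lemma lt_asymm {u v : Word n} (h : o.lt u v) : ¬ o.lt v u :=
  fun h' => o.lt_irrefl u (o.trans h h')

lemma exists_greatest (s : Finset (Word n)) (hs : s.Nonempty) :
    ∃ w ∈ s, ∀ v ∈ s, v ≠ w → o.lt v w := by
  have : IsTrans s (fun a b => o.lt b a) := ⟨fun _ _ _ hab hbc => o.trans hbc hab⟩
  have : Std.Irrefl (fun a b : s => o.lt b a) := ⟨fun a => o.lt_irrefl a⟩
  obtain ⟨⟨w, hw⟩, -, hmax⟩ :=
    (Finite.wellFounded_of_trans_of_irrefl (fun a b : s => o.lt b a)).has_min Set.univ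
      ⟨⟨_, hs.choose_spec⟩, trivial⟩
  refine ⟨w, hw, fun v hv hvw => ?_⟩
  rcases o.trichotomous v w with h | rfl | h
  · exact h
  · exact absurd rfl hvw
  · exact absurd h (hmax ⟨v, hv⟩ trivial)

end MonOrder

lemma wdeg_mul {n : ℕ} (wt : Fin n → ℕ) (u v : Word n) :
    wdeg wt (u * v) = wdeg wt u + wdeg wt v := by
  simp [wdeg, FreeMonoid.toList_mul]

namespace FreeAlg

open MonoidAlgebra

variable {K : Type} [Field K] {n : ℕ} (wt : Fin n → ℕ)

noncomputable def degree (f : FreeAlg K n) : ℕ := f.coeff.support.sup (wdeg wt)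

noncomputable def homogeneousComponent (p : ℕ) : FreeAlg K n →+ FreeAlg K n :=
  coeffAddEquiv.symm.toAddMonoidHom.comp <|
    (Finsupp.filterAddHom fun w => wdeg wt w = p).comp coeffAddEquiv.toAddMonoidHom

variable {wt}

lemma LH_eq_homogeneousComponent (f : FreeAlg K n) :
    LH wt f = homogeneousComponent wt (degree wt f) f := rfl

lemma homogeneousComponent_single (p : ℕ) (w : Word n) (c : K) :
    homogeneousComponent wt p (single w c) = if wdeg wt w = p then single w c else 0 := by
  split_ifs with h
  · exact congrArg ofCoeff (Finsupp.filter_single_of_pos _ h)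
  · exact congrArg ofCoeff (Finsupp.filter_single_of_neg _ h)

lemma coeff_homogeneousComponent (p : ℕ) (f : FreeAlg K n) (w : Word n) :
    (homogeneousComponent wt p f).coeff w = if wdeg wt w = p then f.coeff w else 0 := rfl

lemma homogeneousComponent_homogeneousComponent_self (p : ℕ) (f : FreeAlg K n) :
    homogeneousComponent wt p (homogeneousComponent wt p f) = homogeneousComponent wt p f := by
  ext w
  simp only [coeff_homogeneousComponent]
  split_ifs <;> rfl

lemma homogeneousComponent_homogeneousComponent_of_ne {p q : ℕ} (h : p ≠ q) (f : FreeAlg K n) :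
    homogeneousComponent wt p (homogeneousComponent wt q f) = 0 := by
  ext w
  simp only [coeff_homogeneousComponent, coeff_zero]
  split_ifs <;> first | rfl | omega

lemma homogeneousComponent_single_mul_mul_single (p : ℕ) (u v : Word n) (c d : K)
    (s : FreeAlg K n) :
    homogeneousComponent wt (wdeg wt u + p + wdeg wt v) (single u c * s * single v d) =
      single u c * homogeneousComponent wt p s * single v d := by
  induction s using induction_linear with
  | zero => simp
  | add x y hx hy => simp only [mul_add, add_mul, map_add, hx, hy]
  | single w k =>
    simp only [single_mul_single, homogeneousComponent_single, wdeg_mul]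
    split_ifs <;> first | rfl | (exfalso; omega) | simp

lemma degree_mul_le (f g : FreeAlg K n) : degree wt (f * g) ≤ degree wt f + degree wt g := by
  classical
  refine Finset.sup_le fun w hw => ?_
  obtain ⟨x, hx, y, hy, rfl⟩ := Finset.mem_mul.mp (support_coeff_mul_subset f g hw)
  rw [wdeg_mul]
  exact add_le_add (Finset.le_sup hx) (Finset.le_sup hy)

lemma degree_single_le (w : Word n) (c : K) : degree wt (single w c) ≤ wdeg wt w :=
  Finset.sup_le fun _ hv =>
    (congrArg (wdeg wt) (Finset.mem_singleton.mp (Finsupp.support_single_subset hv))).le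

lemma homogeneousComponent_eq_zero_of_degree_lt {p : ℕ} {f : FreeAlg K n}
    (h : degree wt f < p) : homogeneousComponent wt p f = 0 := by
  ext w
  rw [coeff_homogeneousComponent, coeff_zero, Finsupp.coe_zero, Pi.zero_apply, ite_eq_right_iff]
  rintro rfl
  by_contra hw
  exact (Finset.le_sup (f := wdeg wt) (Finsupp.mem_support_iff.mpr hw)).not_gt h

lemma le_degree_of_homogeneousComponent_ne_zero {p : ℕ} {f : FreeAlg K n}
    (h : homogeneousComponent wt p f ≠ 0) : p ≤ degree wt f :=
  not_lt.mp (mt homogeneousComponent_eq_zero_of_degree_lt h)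

lemma LH_eq_homogeneousComponent_of_degree_le {p : ℕ} {f : FreeAlg K n} (hle : degree wt f ≤ p)
    (hne : homogeneousComponent wt p f ≠ 0) : LH wt f = homogeneousComponent wt p f := by
  rw [LH_eq_homogeneousComponent, le_antisymm hle (le_degree_of_homogeneousComponent_ne_zero hne)]

lemma LH_ne_zero {f : FreeAlg K n} (hf : f ≠ 0) : LH wt f ≠ 0 := by
  obtain ⟨w, hw, hwdeg⟩ := Finset.exists_mem_eq_sup f.coeff.support
    (Finsupp.support_nonempty_iff.mpr (coeff_eq_zero.not.mpr hf)) (wdeg wt)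
  have hwLH : w ∈ (LH wt f).coeff.support := Finset.mem_filter.mpr ⟨hw, hwdeg.symm⟩
  intro hLH
  simp [hLH] at hwLH

variable (wt) in
/-- The grading filtration `F_p K⟨X⟩ = ⊕_{q ≤ p} K⟨X⟩_q`. -/
def filtration (p : ℕ) : AddSubgroup (FreeAlg K n) where
  carrier := {f | degree wt f ≤ p}
  zero_mem' := by simp [degree]
  add_mem' {f g} hf hg := by
    classical
    exact (Finset.sup_mono (Finsupp.support_add (g₁ := f.coeff) (g₂ := g.coeff))).trans
      (Finset.sup_union.trans_le (sup_le (α := ℕ) hf hg))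
  neg_mem' {f} hf := by
    simpa [degree] using hf

variable (wt) in
/-- The nonzero elements are the `LH f` with `f ∈ I` and `degree f = p`. -/
noncomputable def leadingForms (I : TwoSidedIdeal (FreeAlg K n)) (p : ℕ) :
    AddSubgroup (FreeAlg K n) :=
  (I.asIdeal.toAddSubgroup ⊓ filtration wt p).map (homogeneousComponent wt p)

lemma homogeneousComponent_single_mul_LH_mul_single_mem_leadingForms
    {I : TwoSidedIdeal (FreeAlg K n)} {g : FreeAlg K n} (hg : g ∈ I) (p : ℕ) (u v : Word n)
    (c d : K) :
    homogeneousComponent wt p (single u c * LH wt g * single v d) ∈ leadingForms wt I p := by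
  set q := wdeg wt u + degree wt g + wdeg wt v
  have hhom : homogeneousComponent wt q (single u c * LH wt g * single v d) =
      single u c * LH wt g * single v d := by
    rw [LH_eq_homogeneousComponent, homogeneousComponent_single_mul_mul_single,
      homogeneousComponent_homogeneousComponent_self]
  by_cases hpq : p = q
  · subst hpq
    refine ⟨single u c * g * single v d, ⟨I.mul_mem_right _ _ (I.mul_mem_left _ _ hg), ?_⟩, ?_⟩
    · calc degree wt (single u c * g * single v d)
          ≤ degree wt (single u c) + degree wt g + degree wt (single v d) :=
            (degree_mul_le _ _).trans (add_le_add_left (degree_mul_le _ _) _)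
        _ ≤ q := by grw [degree_single_le, degree_single_le]
    · rw [hhom, homogeneousComponent_single_mul_mul_single, LH_eq_homogeneousComponent]
  · rw [← hhom, homogeneousComponent_homogeneousComponent_of_ne hpq]
    exact zero_mem _

lemma homogeneousComponent_mem_leadingForms_of_mem_span {𝒢 : Set (FreeAlg K n)}
    {I : TwoSidedIdeal (FreeAlg K n)} (h𝒢 : 𝒢 ⊆ I) {f : FreeAlg K n}
    (hf : f ∈ TwoSidedIdeal.span (LH wt '' 𝒢)) (p : ℕ) :
    homogeneousComponent wt p f ∈ leadingForms wt I p := by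
  change f ∈ (leadingForms wt I p).comap (homogeneousComponent wt p)
  rw [TwoSidedIdeal.mem_span_iff_mem_addSubgroup_closure] at hf
  refine (AddSubgroup.closure_le _).mpr ?_ hf
  rintro _ ⟨_, ⟨a, -, _, ⟨g, hg, rfl⟩, rfl⟩, b, -, rfl⟩
  induction a using induction_linear with
  | zero => simp only [zero_mul]; exact zero_mem _
  | add a a' ha ha' => simp only [add_mul]; exact add_mem ha ha'
  | single u c =>
    induction b using induction_linear with
    | zero => simp only [mul_zero]; exact zero_mem _
    | add b b' hb hb' => simp only [mul_add]; exact add_mem hb hb'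
    | single v d =>
      exact homogeneousComponent_single_mul_LH_mul_single_mem_leadingForms (h𝒢 hg) p u v c d

end FreeAlg

open FreeAlg

section LeadingMonomial

variable {K : Type} [Field K] {n : ℕ} (o : MonOrder n)

lemma LM_spec {f : FreeAlg K n} (hf : f ≠ 0) :
    LM o f ∈ f.coeff.support ∧ ∀ v ∈ f.coeff.support, v ≠ LM o f → o.lt v (LM o f) := by
  have h := o.exists_greatest _
    (Finsupp.support_nonempty_iff.mpr (MonoidAlgebra.coeff_eq_zero.not.mpr hf))
  rw [LM, dif_pos h]
  exact h.choose_spec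

lemma LM_eq_of_forall_lt {f : FreeAlg K n} (hf : f ≠ 0) {w : Word n}
    (hw : w ∈ f.coeff.support) (hmax : ∀ v ∈ f.coeff.support, v ≠ w → o.lt v w) :
    LM o f = w := by
  obtain ⟨hLM, hLMmax⟩ := LM_spec o hf
  by_contra hne
  exact o.lt_asymm (hmax _ hLM hne) (hLMmax _ hw (Ne.symm hne))

variable {o} {wt : Fin n → ℕ}

lemma wdeg_LM (hgr : ∀ u v : Word n, wdeg wt u < wdeg wt v → o.lt u v)
    {f : FreeAlg K n} (hf : f ≠ 0) : wdeg wt (LM o f) = degree wt f := by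
  obtain ⟨hLM, hLMmax⟩ := LM_spec o hf
  refine le_antisymm (Finset.le_sup hLM) (Finset.sup_le fun v hv => ?_)
  by_contra! hlt
  exact o.lt_asymm (hgr _ _ hlt) (hLMmax v hv (by rintro rfl; exact hlt.false))

lemma LM_LH (hgr : ∀ u v : Word n, wdeg wt u < wdeg wt v → o.lt u v)
    {f : FreeAlg K n} (hf : f ≠ 0) : LM o (LH wt f) = LM o f := by
  refine LM_eq_of_forall_lt o (LH_ne_zero hf)
    (Finset.mem_filter.mpr ⟨(LM_spec o hf).1, wdeg_LM hgr hf⟩) fun v hv hne => ?_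
  exact (LM_spec o hf).2 v (Finset.mem_filter.mp hv).1 hne

lemma exists_LM_eq_of_mem_span_LH (hgr : ∀ u v : Word n, wdeg wt u < wdeg wt v → o.lt u v)
    {𝒢 : Set (FreeAlg K n)} {I : TwoSidedIdeal (FreeAlg K n)}
    (h𝒢 : 𝒢 ⊆ I) {f : FreeAlg K n} (hf : f ∈ TwoSidedIdeal.span (LH wt '' 𝒢)) (hf0 : f ≠ 0) :
    ∃ f' ∈ I, f' ≠ 0 ∧ LM o f' = LM o f := by
  obtain ⟨f', ⟨hf'I, hf'deg⟩, hf'⟩ :=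
    homogeneousComponent_mem_leadingForms_of_mem_span h𝒢 hf (degree wt f)
  rw [← LH_eq_homogeneousComponent] at hf'
  have hf'0 : f' ≠ 0 := by
    rintro rfl
    exact LH_ne_zero hf0 (by rw [← hf', map_zero])
  have hLH : LH wt f' = LH wt f :=
    (LH_eq_homogeneousComponent_of_degree_le hf'deg (hf' ▸ LH_ne_zero hf0)).trans hf'
  refine ⟨f', TwoSidedIdeal.mem_asIdeal.mp hf'I, hf'0, ?_⟩
  rw [← LM_LH hgr hf'0, hLH, LM_LH hgr hf0]

end LeadingMonomial

lemma monIdeal_mono {K : Type} [Field K] {n : ℕ} {Ω Ω' : Set (Word n)} (h : Ω ⊆ Ω') :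
    monIdeal K Ω ≤ monIdeal K Ω' :=
  TwoSidedIdeal.span_mono (Set.image_mono h)

theorem LH_isGrobnerBasis_general {K : Type} [Field K] {n : ℕ}
    (wt : Fin n → ℕ) (o : MonOrder n)
    (hgr : ∀ u v : Word n, wdeg wt u < wdeg wt v → o.lt u v)
    (𝒢 : Set (FreeAlg K n))
    (I : TwoSidedIdeal (FreeAlg K n))
    (hGB : IsGrobnerBasis o 𝒢 I) :
    IsGrobnerBasis o (LH wt '' 𝒢) (TwoSidedIdeal.span (LH wt '' 𝒢)) ∧
      ∀ g ∈ 𝒢, LM o (LH wt g) = LM o g := by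
  have h𝒢 : 𝒢 ⊆ I := fun g hg => (hGB.1 hg).1
  have hLM : ∀ g ∈ 𝒢, LM o (LH wt g) = LM o g := fun g hg => LM_LH hgr (hGB.1 hg).2
  set J := TwoSidedIdeal.span (LH wt '' 𝒢)
  have hLH𝒢 : LH wt '' 𝒢 ⊆ {f | f ∈ J ∧ f ≠ 0} := by
    rintro _ ⟨g, hg, rfl⟩
    exact ⟨TwoSidedIdeal.subset_span ⟨g, hg, rfl⟩, LH_ne_zero (hGB.1 hg).2⟩
  have hLMJ : LM o '' {f | f ∈ J ∧ f ≠ 0} ⊆ LM o '' {f | f ∈ I ∧ f ≠ 0} := by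
    rintro _ ⟨f, ⟨hfJ, hf0⟩, rfl⟩
    obtain ⟨f', hf'I, hf'0, hf'⟩ := exists_LM_eq_of_mem_span_LH hgr h𝒢 hfJ hf0
    exact ⟨f', ⟨hf'I, hf'0⟩, hf'⟩
  refine ⟨⟨hLH𝒢, le_antisymm ?_ (monIdeal_mono (Set.image_mono hLH𝒢))⟩, hLM⟩
  calc monIdeal K (LM o '' {f | f ∈ J ∧ f ≠ 0})
      ≤ monIdeal K (LM o '' {f | f ∈ I ∧ f ≠ 0}) := monIdeal_mono hLMJ
    _ = monIdeal K (LM o '' 𝒢) := hGB.2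
    _ = monIdeal K (LM o '' (LH wt '' 𝒢)) := by
      rw [← Set.image_comp]
      exact congrArg _ (Set.image_congr fun g hg => (hLM g hg).symm)

/-- Let `≺_gr` be an `ℕ`-graded monomial ordering (degree is compared first) for a weight
`ℕ`-grading of `K⟨X⟩`, and `𝒢` a finite Gröbner basis of `I = ⟨𝒢⟩` w.r.t. `≺_gr`.  Then
the set `LH(𝒢)` of leading homogeneous components of elements of `𝒢` is a Gröbner basis
of the graded ideal `⟨LH(𝒢)⟩`, and `LM(LH(g)) = LM(g)` for every `g ∈ 𝒢`. -/
theorem LH_isGrobnerBasis {K : Type} [Field K] {n : ℕ}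
    (wt : Fin n → ℕ) (hwt : ∀ i, 0 < wt i) (o : MonOrder n)
    (hgr : ∀ u v : Word n, wdeg wt u < wdeg wt v → o.lt u v)
    (𝒢 : Set (FreeAlg K n)) (hfin : 𝒢.Finite)
    (I : TwoSidedIdeal (FreeAlg K n)) (hI : I = TwoSidedIdeal.span 𝒢)
    (hGB : IsGrobnerBasis o 𝒢 I) :
    IsGrobnerBasis o (LH wt '' 𝒢) (TwoSidedIdeal.span (LH wt '' 𝒢)) ∧
      ∀ g ∈ 𝒢, LM o (LH wt g) = LM o g :=
  LH_isGrobnerBasis_general wt o hgr 𝒢 I hGB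
end

section
/- Let Ω be a finite reduced set of words in the free monoid on a finite set X with Ω ∩ X = ∅, and R = K⟨X⟩/⟨Ω⟩. If every normal word u with 1 ≤ l(u) ≤ ℓ is cyclic — where ℓ is the maximal length of words in Ω and u is cyclic iff there is a word v with (uv)^q normal for all q ∈ ℕ — then R is semiprime. -/
open scoped Classical

/-!
If `a ∉ ⟨Ω⟩`, let `u` be a longest normal word occurring in `a`. As soon as some word `V` makes
`u V u` normal, the monomial `u V u` occurs in `a V a` with coefficient `a_u²`: in any other
factorisation `u V u = a' V b'` the words `a'`, `b'` are factors of a normal word, hence normal and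
not longer than `u`. So `a V a ∉ ⟨Ω⟩`.

Such a `V` exists for every normal `u`. Forbidden words have length at most `ℓ = k + 1`, so two
normal words overlapping in `k` letters glue to a normal word. For a normal window `x` of length
`k + 1`, cyclicity (with `q = 2`) gives a normal word `x v x v`, whose factor
`x.drop 1 ++ v ++ x.take k` leads from the last `k` letters of `x` to its first `k`. Chaining these
steps along the windows of `u` leads from the suffix of length `k` of `u` to its prefix of length
`k`, and gluing `u` on both sides yields `u V u`.
-/

namespace MonomialAlgebra

theorem isSemiprimeRing_quotient_of_forall_exists_mul_mul_notMem {R : Type*} [Ring R]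
    (I : TwoSidedIdeal R) (h : ∀ x ∉ I, ∃ r, x * r * x ∉ I) :
    IsSemiprimeRing I.ringCon.Quotient := by
  have mk_eq_zero : ∀ x : R, I.ringCon.mk' x = 0 ↔ x ∈ I := fun x => by
    rw [← TwoSidedIdeal.mem_ker, TwoSidedIdeal.ker_ringCon_mk']
  intro a ha
  obtain ⟨x, rfl⟩ := I.ringCon.mk'_surjective a
  by_contra hx
  obtain ⟨r, hr⟩ := h x (mt (mk_eq_zero x).mpr hx)
  exact hr ((mk_eq_zero _).mp (by simpa using ha (I.ringCon.mk' r)))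

section Lists

variable {α : Type*} {Λ : Set (List α)}

def ListNormal (Λ : Set (List α)) (l : List α) : Prop := ∀ w ∈ Λ, ¬ w <:+: l

def Linked (Λ : Set (List α)) (a b : List α) : Prop := ∃ v, ListNormal Λ (a ++ v ++ b)

def ShortNormalListsCyclic (Λ : Set (List α)) (ℓ : ℕ) : Prop :=
  ∀ u, ListNormal Λ u → 1 ≤ u.length → u.length ≤ ℓ → ∃ v, ListNormal Λ (u ++ v ++ u ++ v)

theorem ListNormal.of_infix {l m : List α} (h : ListNormal Λ l) (hm : m <:+: l) :
    ListNormal Λ m :=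
  fun w hw hwm => h w hw (hwm.trans hm)

/-- A forbidden factor of `A ++ b ++ C` is at most one letter longer than `b`, so it lies
inside `A ++ b` or inside `b ++ C`. -/
theorem ListNormal.append_append {k : ℕ} (hΛ : ∀ w ∈ Λ, w.length ≤ k + 1)
    {A b C : List α} (hb : b.length = k)
    (hAb : ListNormal Λ (A ++ b)) (hbC : ListNormal Λ (b ++ C)) : ListNormal Λ (A ++ b ++ C) := by
  rintro ω hω ⟨s, t, hst⟩
  have hlen := congrArg List.length hst
  simp only [List.length_append] at hlen
  have hωk := hΛ ω hω
  by_cases hpre : s.length + ω.length ≤ A.length + b.length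
  · refine hAb ω hω ((List.suffix_append s ω).isInfix.trans (List.prefix_of_prefix_length_le ?_
      (List.prefix_append (A ++ b) C) (by simpa using hpre)).isInfix)
    exact ⟨t, by simpa [List.append_assoc] using hst⟩
  · have hsuf : ω ++ t <:+ A ++ b ++ C := ⟨s, by simpa [List.append_assoc] using hst⟩
    refine hbC ω hω ((List.prefix_append ω t).isInfix.trans
      (List.suffix_of_suffix_length_le hsuf ⟨A, (List.append_assoc _ _ _).symm⟩ ?_).isInfix)
    simp only [List.length_append]
    omega

theorem Linked.append_left {k : ℕ} (hΛ : ∀ w ∈ Λ, w.length ≤ k + 1) {A s p : List α}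
    (hs : s.length = k) (hA : ListNormal Λ (A ++ s)) (h : Linked Λ s p) : Linked Λ (A ++ s) p := by
  obtain ⟨v, hv⟩ := h
  refine ⟨v, ?_⟩
  simpa [List.append_assoc] using hA.append_append hΛ hs (C := v ++ p) (by simpa using hv)

theorem Linked.append_right {k : ℕ} (hΛ : ∀ w ∈ Λ, w.length ≤ k + 1) {s p B : List α}
    (hp : p.length = k) (hB : ListNormal Λ (p ++ B)) (h : Linked Λ s p) : Linked Λ s (p ++ B) := by
  obtain ⟨v, hv⟩ := h
  refine ⟨v, ?_⟩
  simpa [List.append_assoc] using hv.append_append hΛ hp hB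

theorem Linked.trans {k : ℕ} (hΛ : ∀ w ∈ Λ, w.length ≤ k + 1) {a b c : List α}
    (hb : b.length = k) (hab : Linked Λ a b) (hbc : Linked Λ b c) : Linked Λ a c := by
  obtain ⟨v, hv⟩ := hab
  obtain ⟨w, hw⟩ := hbc.append_left hΛ hb hv
  exact ⟨v ++ b ++ w, by simpa [List.append_assoc] using hw⟩

theorem ShortNormalListsCyclic.linked_self {ℓ : ℕ} (hcyc : ShortNormalListsCyclic Λ ℓ)
    {u : List α} (hu : ListNormal Λ u) (hℓ : u.length ≤ ℓ) : Linked Λ u u := by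
  rcases u with _ | ⟨a, t⟩
  · exact ⟨[], hu⟩
  obtain ⟨v, hv⟩ := hcyc _ hu (by simp) hℓ
  exact ⟨v, hv.of_infix (List.prefix_append _ v).isInfix⟩

theorem ShortNormalListsCyclic.linked_drop_one_take {k : ℕ}
    (hcyc : ShortNormalListsCyclic Λ (k + 1)) {x : List α} (hx : ListNormal Λ x)
    (hxl : x.length = k + 1) : Linked Λ (x.drop 1) (x.take k) := by
  obtain ⟨v, hv⟩ := hcyc x hx (by omega) hxl.le
  refine ⟨v, hv.of_infix ⟨x.take 1, x.drop k ++ v, ?_⟩⟩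
  simp only [List.append_assoc]
  rw [← List.append_assoc (x.take k), List.take_append_drop, ← List.append_assoc (x.take 1),
    List.take_append_drop]

theorem ShortNormalListsCyclic.linked_drop_take {k : ℕ} (hΛ : ∀ w ∈ Λ, w.length ≤ k + 1)
    (hcyc : ShortNormalListsCyclic Λ (k + 1)) :
    ∀ {u : List α}, ListNormal Λ u → k ≤ u.length →
      Linked Λ (u.drop (u.length - k)) (u.take k)
  | [], hu, hk => by
    simpa [show k = 0 by simpa using hk] using hcyc.linked_self hu (by simp)
  | a :: t, hu, hk => by
    rcases hk.eq_or_lt with hk | hk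
    · rw [hk, Nat.sub_self, List.drop_zero, List.take_length]
      exact hcyc.linked_self hu (by omega)
    have hkt : k ≤ t.length := by simpa [Nat.lt_succ_iff] using hk
    have ht : ListNormal Λ t := hu.of_infix (List.suffix_cons a t).isInfix
    have hwindow := hcyc.linked_drop_one_take (x := (a :: t).take (k + 1))
      (hu.of_infix (List.take_prefix _ _).isInfix) (by simp at hk ⊢; omega)
    have htake : ((a :: t).take (k + 1)).drop 1 = t.take k := by simp
    rw [htake, List.take_take, min_eq_left k.le_succ] at hwindow
    have hdrop : (a :: t).drop ((a :: t).length - k) = t.drop (t.length - k) := by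
      rw [List.length_cons, Nat.sub_add_comm hkt, List.drop_succ_cons]
    rw [hdrop]
    exact (hcyc.linked_drop_take hΛ ht hkt).trans hΛ (by simpa using hkt) hwindow

theorem ShortNormalListsCyclic.linked_self_of_normal {ℓ : ℕ} (hΛ : ∀ w ∈ Λ, w.length ≤ ℓ)
    (hcyc : ShortNormalListsCyclic Λ ℓ) {u : List α} (hu : ListNormal Λ u) : Linked Λ u u := by
  rcases le_or_gt u.length ℓ with hshort | hlong
  · exact hcyc.linked_self hu hshort
  rcases ℓ with _ | k
  · refine ⟨[], fun w hw _ => hu w hw ?_⟩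
    rw [List.eq_nil_of_length_eq_zero (Nat.le_zero.mp (hΛ w hw))]
    exact List.nil_infix
  have hs := hcyc.linked_drop_take hΛ hu (by omega)
  have h₁ := hs.append_left hΛ (A := u.take (u.length - k)) (by simp; omega)
    (by rwa [List.take_append_drop])
  rw [List.take_append_drop] at h₁
  have h₂ := h₁.append_right hΛ (B := u.drop k) (by simp; omega) (by rwa [List.take_append_drop])
  rwa [List.take_append_drop] at h₂

end Lists

section Words

variable {n : ℕ} {Ω : Set (Word n)}

def IsNormalWord (Ω : Set (Word n)) (w : Word n) : Prop := ¬ ∃ ω ∈ Ω, WDvd ω w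

theorem wdvd_iff_infix {v u : Word n} : WDvd v u ↔ v.toList <:+: u.toList := by
  constructor
  · rintro ⟨w, s, rfl⟩
    exact ⟨w.toList, s.toList, by simp⟩
  · rintro ⟨s, t, h⟩
    refine ⟨FreeMonoid.ofList s, FreeMonoid.ofList t, FreeMonoid.toList.injective ?_⟩
    simp [← h]

theorem _root_.WDvd.trans {u v w : Word n} (huv : WDvd u v) (hvw : WDvd v w) : WDvd u w := by
  obtain ⟨a, b, rfl⟩ := huv
  obtain ⟨c, d, rfl⟩ := hvw
  exact ⟨c * a, b * d, by simp only [mul_assoc]⟩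

theorem IsNormalWord.of_wdvd {u v : Word n} (hv : IsNormalWord Ω v) (huv : WDvd u v) :
    IsNormalWord Ω u :=
  fun ⟨ω, hω, hωu⟩ => hv ⟨ω, hω, WDvd.trans hωu huv⟩

theorem isNormalWord_iff_listNormal {w : Word n} :
    IsNormalWord Ω w ↔ ListNormal (FreeMonoid.toList '' Ω) w.toList := by
  simp only [IsNormalWord, ListNormal, wdvd_iff_infix, Set.forall_mem_image, not_exists, not_and]

theorem exists_isNormalWord_mul_mul {ℓ : ℕ} (hΩ : ∀ ω ∈ Ω, ω.toList.length ≤ ℓ)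
    (hcyc : ∀ u : Word n, IsNormalWord Ω u → 1 ≤ u.toList.length → u.toList.length ≤ ℓ →
      ∃ v : Word n, ∀ q : ℕ, IsNormalWord Ω ((u * v) ^ q))
    {u : Word n} (hu : IsNormalWord Ω u) : ∃ V : Word n, IsNormalWord Ω (u * V * u) := by
  have hcycList : ShortNormalListsCyclic (FreeMonoid.toList '' Ω) ℓ := by
    intro l hl hl₁ hlℓ
    obtain ⟨v, hv⟩ := hcyc (FreeMonoid.ofList l) (isNormalWord_iff_listNormal.mpr hl) hl₁ hlℓ
    refine ⟨v.toList, ?_⟩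
    simpa [isNormalWord_iff_listNormal, sq, List.append_assoc] using hv 2
  obtain ⟨v, hv⟩ := hcycList.linked_self_of_normal (Set.forall_mem_image.mpr hΩ)
    (isNormalWord_iff_listNormal.mp hu)
  exact ⟨FreeMonoid.ofList v, isNormalWord_iff_listNormal.mpr (by simpa using hv)⟩

theorem eq_and_eq_of_mul_mul_eq {a b V u : Word n} (ha : a.toList.length ≤ u.toList.length)
    (hb : b.toList.length ≤ u.toList.length) (h : a * V * b = u * V * u) : a = u ∧ b = u := by
  have h' : a.toList ++ V.toList ++ b.toList = u.toList ++ V.toList ++ u.toList := by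
    simpa using congrArg FreeMonoid.toList h
  have hlen := congrArg List.length h'
  simp only [List.length_append] at hlen
  obtain ⟨haV, hb'⟩ := List.append_inj h' (by simp only [List.length_append]; omega)
  exact ⟨FreeMonoid.toList.injective (List.append_cancel_right haV),
    FreeMonoid.toList.injective hb'⟩

end Words

section Algebra

variable {K : Type} [Field K] {n : ℕ} {Ω : Set (Word n)}

theorem mem_monIdeal_iff {f : FreeAlg K n} :
    f ∈ monIdeal K Ω ↔ ∀ w ∈ f.coeff.support, ¬ IsNormalWord Ω w := by
  constructor
  · intro hf
    induction hf using TwoSidedIdeal.span_induction with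
    | mem x hx =>
      obtain ⟨ω, hω, rfl⟩ := hx
      intro w hw hnormal
      rw [Finset.mem_singleton.mp (Finsupp.support_single_subset hw)] at hnormal
      exact hnormal ⟨ω, hω, 1, 1, by simp⟩
    | zero => simp
    | add x y _ _ hx hy =>
      intro w hw
      rcases Finset.mem_union.mp (Finsupp.support_add (by simpa using hw)) with hw | hw
      exacts [hx w hw, hy w hw]
    | neg x _ hx => simpa using hx
    | left_absorb a x _ hx =>
      intro w hw hnormal
      obtain ⟨c, -, d, hd, rfl⟩ :=
        Finset.mem_mul.mp (MonoidAlgebra.support_coeff_mul_subset a x hw)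
      exact hx d hd (hnormal.of_wdvd ⟨c, 1, by simp⟩)
    | right_absorb b x _ hx =>
      intro w hw hnormal
      obtain ⟨c, hc, d, -, rfl⟩ :=
        Finset.mem_mul.mp (MonoidAlgebra.support_coeff_mul_subset x b hw)
      exact hx c hc (hnormal.of_wdvd ⟨1, d, by simp⟩)
  · intro hf
    rw [← MonoidAlgebra.sum_coeff_single f]
    refine TwoSidedIdeal.finsetSum_mem _ _ _ fun w hw => ?_
    obtain ⟨ω, hω, a, b, rfl⟩ := not_not.mp (hf w hw)
    have hsplit : MonoidAlgebra.single (a * ω * b) (f.coeff (a * ω * b))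
        = MonoidAlgebra.single a (f.coeff (a * ω * b)) * mono ω * mono b := by
      simp [mono, MonoidAlgebra.single_mul_single]
    rw [hsplit]
    exact TwoSidedIdeal.mul_mem_right _ _ _
      (TwoSidedIdeal.mul_mem_left _ _ _ (TwoSidedIdeal.subset_span ⟨ω, hω, rfl⟩))

theorem coeff_mul_mono_mul {f : FreeAlg K n} {u V : Word n}
    (huniq : ∀ a ∈ f.coeff.support, ∀ b ∈ f.coeff.support,
      a * V * b = u * V * u → a = u ∧ b = u) :
    (f * mono V * f).coeff (u * V * u) = f.coeff u * f.coeff u := by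
  have hunique : UniqueMul (f * mono V).coeff.support f.coeff.support (u * V) u := by
    intro a' b ha' hb hab
    obtain ⟨a, ha, rfl⟩ :=
      Finset.mem_image.mp (MonoidAlgebra.support_coeff_mul_single_subset f 1 V ha')
    obtain ⟨rfl, rfl⟩ := huniq a ha b hb hab
    exact ⟨rfl, rfl⟩
  rw [MonoidAlgebra.coeff_mul_mul_of_uniqueMul hunique, mono, MonoidAlgebra.coeff_mul_single_mul,
    mul_one]

theorem exists_mul_mul_notMem_monIdeal
    (hsandwich : ∀ u, IsNormalWord Ω u → ∃ V : Word n, IsNormalWord Ω (u * V * u))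
    {f : FreeAlg K n} (hf : f ∉ monIdeal K Ω) : ∃ r, f * r * f ∉ monIdeal K Ω := by
  obtain ⟨u, hu, hmax⟩ := Finset.exists_max_image (f.coeff.support.filter (IsNormalWord Ω))
    (fun w => w.toList.length)
    (by simpa [Finset.filter_nonempty_iff] using mt mem_monIdeal_iff.mpr hf)
  rw [Finset.mem_filter] at hu
  obtain ⟨V, hV⟩ := hsandwich u hu.2
  refine ⟨mono V, fun hmem => mem_monIdeal_iff.mp hmem (u * V * u) ?_ hV⟩
  have huniq : ∀ a ∈ f.coeff.support, ∀ b ∈ f.coeff.support,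
      a * V * b = u * V * u → a = u ∧ b = u := by
    intro a ha b hb hab
    have haN : IsNormalWord Ω a := hV.of_wdvd ⟨1, V * b, by simp [← hab, mul_assoc]⟩
    have hbN : IsNormalWord Ω b := hV.of_wdvd ⟨a * V, 1, by simp [← hab]⟩
    exact eq_and_eq_of_mul_mul_eq (hmax a (Finset.mem_filter.mpr ⟨ha, haN⟩))
      (hmax b (Finset.mem_filter.mpr ⟨hb, hbN⟩)) hab
  rw [Finsupp.mem_support_iff, coeff_mul_mono_mul huniq]
  exact mul_ne_zero (Finsupp.mem_support_iff.mp hu.1) (Finsupp.mem_support_iff.mp hu.1)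

end Algebra

end MonomialAlgebra

theorem monomialAlgebra_semiprime_of_short_normal_words_cyclic_general {K : Type} [Field K] {n : ℕ}
    (Ω : Set (Word n)) (hfin : Ω.Finite)
    (ℓ : ℕ) (hℓ : ℓ = hfin.toFinset.sup (fun w => (FreeMonoid.toList w).length))
    (hcyc : ∀ u : Word n, (¬ ∃ ω ∈ Ω, WDvd ω u) →
      1 ≤ (FreeMonoid.toList u).length → (FreeMonoid.toList u).length ≤ ℓ →
      ∃ v : Word n, ∀ q : ℕ, ¬ ∃ ω ∈ Ω, WDvd ω ((u * v) ^ q)) :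
    IsSemiprimeRing (monIdeal K Ω).ringCon.Quotient := by
  have hΩ : ∀ ω ∈ Ω, ω.toList.length ≤ ℓ := fun ω hω =>
    hℓ ▸ Finset.le_sup (f := fun w => w.toList.length) (hfin.mem_toFinset.mpr hω)
  refine MonomialAlgebra.isSemiprimeRing_quotient_of_forall_exists_mul_mul_notMem _ fun f hf => ?_
  exact MonomialAlgebra.exists_mul_mul_notMem_monIdeal
    (fun u hu => MonomialAlgebra.exists_isNormalWord_mul_mul hΩ hcyc hu) hf

/-- One direction of Gateva-Ivanova's criterion: let `Ω` be a finite reduced set of words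
with `Ω ∩ X = ∅` and `ℓ` the maximal length of words in `Ω`.  If every normal word `u`
with `1 ≤ l(u) ≤ ℓ` is cyclic (i.e. there is a word `v` with `(uv)^q` normal for all
`q ∈ ℕ`), then `R = K⟨X⟩/⟨Ω⟩` is semiprime. -/
theorem monomialAlgebra_semiprime_of_short_normal_words_cyclic {K : Type} [Field K] {n : ℕ}
    (Ω : Set (Word n)) (hfin : Ω.Finite)
    (hnotX : ∀ w ∈ Ω, ∀ i : Fin n, w ≠ FreeMonoid.of i)
    (hred : ∀ u ∈ Ω, ∀ v ∈ Ω, u ≠ v → ¬ WDvd u v)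
    (ℓ : ℕ) (hℓ : ℓ = hfin.toFinset.sup (fun w => (FreeMonoid.toList w).length))
    (hcyc : ∀ u : Word n, (¬ ∃ ω ∈ Ω, WDvd ω u) →
      1 ≤ (FreeMonoid.toList u).length → (FreeMonoid.toList u).length ≤ ℓ →
      ∃ v : Word n, ∀ q : ℕ, ¬ ∃ ω ∈ Ω, WDvd ω ((u * v) ^ q)) :
    IsSemiprimeRing (monIdeal K Ω).ringCon.Quotient :=
  monomialAlgebra_semiprime_of_short_normal_words_cyclic_general Ω hfin ℓ hℓ hcyc
end
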